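/- arXiv:2203.00940 — 3 statements merged into one kernel-verified Lean document; each statement's English description precedes it below -/
import Mathlib

section
/- For any divisor A of F: (1) the Apéry system y_0^{(A)}, …, y_{μ−1}^{(A)} is an 𝔽_q[x]-basis of Я(A); and (2) −deg A ≤ δ_A(y_i^{(A)}) ≤ 2g − 1 − deg A + μ for every i = 0,…,μ−1. -/
noncomputable section

open Polynomial
attribute [local instance] Classical.propDecidable

/-- Abstract axiomatization of the data of an algebraic function field of one
variable of genus `genus` whose full field of constants is the finite field `Fq`:
a field `F` of functions, a set of places with their discrete valuations `v`
(normalized so that each valuation is surjective onto `ℤ`; by convention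
`v P 0 = 0`), degrees of places, evaluation of functions at rational places,
Riemann–Roch spaces `RRmod A` of divisors `A : Place →₀ ℤ` together with the
statement of the Riemann–Roch theorem tying their dimensions to the genus. -/
structure FnF (Fq : Type) [Field Fq] where
  F : Type
  [fieldF : Field F]
  [algF : Algebra Fq F]
  Place : Type
  v : Place → F → ℤ
  v_zero : ∀ P, v P 0 = 0
  v_mul : ∀ (P : Place) (f g : F), f ≠ 0 → g ≠ 0 → v P (f * g) = v P f + v P g
  v_add : ∀ (P : Place) (f g : F), f + g ≠ 0 → f ≠ 0 → g ≠ 0 →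
    min (v P f) (v P g) ≤ v P (f + g)
  v_neg : ∀ (P : Place) (f : F), v P (-f) = v P f
  v_const : ∀ (P : Place) (c : Fq), v P (algebraMap Fq F c) = 0
  v_surj : ∀ P : Place, ∃ f : F, f ≠ 0 ∧ v P f = 1
  v_finite : ∀ f : F, f ≠ 0 → {P : Place | v P f ≠ 0}.Finite
  fullConstantField : ∀ f : F, f ≠ 0 → (∀ P, 0 ≤ v P f) →
    ∃ c : Fq, f = algebraMap Fq F c
  degPlace : Place → ℕ
  degPlace_pos : ∀ P, 0 < degPlace P
  eval : Place → F → Fq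
  eval_add : ∀ (P : Place) (f g : F), degPlace P = 1 → 0 ≤ v P f → 0 ≤ v P g →
    eval P (f + g) = eval P f + eval P g
  eval_mul : ∀ (P : Place) (f g : F), degPlace P = 1 → 0 ≤ v P f → 0 ≤ v P g →
    eval P (f * g) = eval P f * eval P g
  eval_const : ∀ (P : Place) (c : Fq), degPlace P = 1 →
    eval P (algebraMap Fq F c) = c
  eval_eq_zero_iff : ∀ (P : Place) (f : F), degPlace P = 1 → 0 ≤ v P f →
    (eval P f = 0 ↔ (f = 0 ∨ 1 ≤ v P f))
  genus : ℕ
  RRmod : (Place →₀ ℤ) → Submodule Fq F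
  mem_RRmod : ∀ (A : Place →₀ ℤ) (f : F),
    f ∈ RRmod A ↔ (f = 0 ∨ ∀ P, 0 ≤ v P f + A P)
  riemannRoch_le : ∀ A : Place →₀ ℤ,
    (A.sum fun P n => n * (degPlace P : ℤ)) + 1 - genus ≤
      (Module.finrank Fq (RRmod A) : ℤ)
  riemannRoch_eq : ∀ A : Place →₀ ℤ,
    2 * (genus : ℤ) - 1 ≤ (A.sum fun P n => n * (degPlace P : ℤ)) →
    (Module.finrank Fq (RRmod A) : ℤ) =
      (A.sum fun P n => n * (degPlace P : ℤ)) + 1 - genus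
  RRmod_eq_bot : ∀ A : Place →₀ ℤ,
    (A.sum fun P n => n * (degPlace P : ℤ)) < 0 → RRmod A = ⊥

attribute [instance] FnF.fieldF FnF.algF

namespace FnF

variable {Fq : Type} [Field Fq] (D : FnF Fq)

/-- Divisors of the function field. -/
abbrev Divisor := D.Place →₀ ℤ

/-- The degree of a divisor. -/
def degDiv (A : D.Divisor) : ℤ := A.sum fun P n => n * (D.degPlace P : ℤ)

/-- `Я(A) = ⋃ₘ L(m·P∞ + A)`, the functions whose pole divisor is bounded by
`A` away from `P∞`. -/
def Ya (Pinf : D.Place) (A : D.Divisor) : Set D.F :=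
  {a | ∃ m : ℤ, a ∈ D.RRmod (Finsupp.single Pinf m + A)}

/-- `δ_A(a) = -v_{P∞}(a) - A(P∞)`, the least `m` with `a ∈ L(m·P∞ + A)`
(meaningful for nonzero `a ∈ Я(A)`). -/
def deltaZ (Pinf : D.Place) (A : D.Divisor) (a : D.F) : ℤ :=
  -(D.v Pinf a) - A Pinf

/-- `δ_A(a)` with the convention `δ_A(0) = -∞`. -/
def delta (Pinf : D.Place) (A : D.Divisor) (a : D.F) : WithBot ℤ :=
  if a = 0 then ⊥ else (D.deltaZ Pinf A a : WithBot ℤ)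

/-- The Weierstrass semigroup of a place `P∞`: pole orders at `P∞` of functions
regular away from `P∞`. -/
def WSemigroup (Pinf : D.Place) : Set ℤ :=
  {m | ∃ f : D.F, f ≠ 0 ∧ D.v Pinf f = -m ∧ ∀ P, P ≠ Pinf → 0 ≤ D.v P f}

end FnF

namespace FnF

variable {Fq : Type} [Field Fq] (D : FnF Fq)

/-- `y : Fin μ → F` is the Apéry system of `Я(A)` (with respect to `P∞` and `μ`):
`y i` is a nonzero element of `Я(A)` of minimal `δ_A`-value among all nonzero
`a ∈ Я(A)` with `δ_A(a) ≡ i (mod μ)`. -/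
def IsApery (Pinf : D.Place) (μ : ℕ) (A : D.Divisor) (y : Fin μ → D.F) : Prop :=
  ∀ i : Fin μ, y i ∈ D.Ya Pinf A ∧ y i ≠ 0 ∧
    D.deltaZ Pinf A (y i) ≡ (i : ℤ) [ZMOD (μ : ℤ)] ∧
    ∀ a ∈ D.Ya Pinf A, a ≠ 0 → D.deltaZ Pinf A a ≡ (i : ℤ) [ZMOD (μ : ℤ)] →
      D.deltaZ Pinf A (y i) ≤ D.deltaZ Pinf A a

end FnF


namespace FnF

variable {Fq : Type} [Field Fq] (D : FnF Fq)

lemma v_one (P : D.Place) : D.v P (1 : D.F) = 0 := by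
  simpa using D.v_const P 1

lemma v_pow (P : D.Place) {f : D.F} (hf : f ≠ 0) (n : ℕ) :
    D.v P (f ^ n) = n * D.v P f := by
  induction n with
  | zero => simpa using D.v_one P
  | succ n ih =>
    rw [pow_succ, D.v_mul P _ _ (pow_ne_zero n hf) hf, ih]
    push_cast; ring

lemma v_inv (P : D.Place) {f : D.F} (hf : f ≠ 0) : D.v P f⁻¹ = -D.v P f := by
  have h1 := D.v_mul P f f⁻¹ hf (inv_ne_zero hf)
  rw [mul_inv_cancel₀ hf, D.v_one] at h1
  omega

lemma v_add' (P : D.Place) (f g : D.F) (h : f + g ≠ 0) :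
    min (D.v P f) (D.v P g) ≤ D.v P (f + g) := by
  by_cases hf : f = 0
  · subst hf; rw [zero_add]; exact min_le_right _ _
  by_cases hg : g = 0
  · subst hg; rw [add_zero]; exact min_le_left _ _
  exact D.v_add P f g h hf hg

lemma v_add_eq_left (P : D.Place) {f g : D.F} (hf : f ≠ 0) (hg : g ≠ 0)
    (hlt : D.v P f < D.v P g) : f + g ≠ 0 ∧ D.v P (f + g) = D.v P f := by
  have hne : f + g ≠ 0 := by
    intro h0
    have hfg : f = -g := by
      have := add_eq_zero_iff_eq_neg.mp h0
      exact this
    rw [hfg, D.v_neg] at hlt; omega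
  refine ⟨hne, le_antisymm ?_ ?_⟩
  · have h2 := D.v_add P (f + g) (-g) (by simpa using hf) hne (neg_ne_zero.mpr hg)
    rw [add_neg_cancel_right, D.v_neg] at h2
    omega
  · have h3 := D.v_add P f g hne hf hg
    omega

lemma v_sum (P : D.Place) {ι : Type} (c : ℤ) (s : Finset ι) (f : ι → D.F)
    (hs : (∑ i ∈ s, f i) ≠ 0) (hc : ∀ i ∈ s, f i ≠ 0 → c ≤ D.v P (f i)) :
    c ≤ D.v P (∑ i ∈ s, f i) := by
  classical
  induction s using Finset.induction with
  | empty => simp at hs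
  | @insert a s ha ih =>
    rw [Finset.sum_insert ha] at hs ⊢
    by_cases h1 : f a = 0
    · rw [h1, zero_add] at hs ⊢
      exact ih hs (fun i hi => hc i (Finset.mem_insert_of_mem hi))
    by_cases h2 : (∑ i ∈ s, f i) = 0
    · rw [h2, add_zero]
      exact hc a (Finset.mem_insert_self a s) h1
    have hmin := D.v_add' P (f a) (∑ i ∈ s, f i) hs
    have ha' := hc a (Finset.mem_insert_self a s) h1
    have hs' := ih h2 (fun i hi => hc i (Finset.mem_insert_of_mem hi))
    omega

lemma aeval_key (Pinf : D.Place) (μ : ℕ) (hμpos : 0 < μ) (x : D.F)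
    (hxv : D.v Pinf x = -(μ : ℤ)) (hxreg : ∀ P, P ≠ Pinf → 0 ≤ D.v P x) :
    ∀ (n : ℕ) (p : Polynomial Fq), p.natDegree ≤ n →
      (∀ P, P ≠ Pinf → 0 ≤ D.v P (aeval x p)) ∧
      (p ≠ 0 → aeval x p ≠ 0 ∧
        D.v Pinf (aeval x p) = -((p.natDegree : ℤ) * μ)) := by
  have hx0 : x ≠ 0 := by
    intro h; rw [h, D.v_zero] at hxv; omega
  have hinj : Function.Injective (algebraMap Fq D.F) := (algebraMap Fq D.F).injective
  have hterm : ∀ (cc : Fq), cc ≠ 0 → ∀ (k : ℕ),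
      algebraMap Fq D.F cc * x ^ k ≠ 0 ∧
      (∀ P : D.Place, D.v P (algebraMap Fq D.F cc * x ^ k) = k * D.v P x) := by
    intro cc hcc k
    have hcne : algebraMap Fq D.F cc ≠ 0 := by
      intro h; exact hcc (hinj (by simpa using h))
    refine ⟨mul_ne_zero hcne (pow_ne_zero k hx0), fun P => ?_⟩
    rw [D.v_mul P _ _ hcne (pow_ne_zero k hx0), D.v_const, D.v_pow P hx0, zero_add]
  intro n
  induction n with
  | zero =>
    intro p hp
    obtain ⟨cp, hcp⟩ := Polynomial.natDegree_eq_zero.mp (Nat.le_zero.mp hp)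
    subst hcp
    constructor
    · intro P _
      rw [Polynomial.aeval_C, D.v_const]
    · intro hp0
      have hcne : cp ≠ 0 := fun h => hp0 (by rw [h, map_zero])
      rw [Polynomial.aeval_C]
      refine ⟨fun h => hcne (hinj (by simpa using h)), ?_⟩
      rw [D.v_const]
      simp
  | succ n ih =>
    intro p hp
    by_cases hle : p.natDegree ≤ n
    · exact ih p hle
    have hd : p.natDegree = n + 1 := by omega
    have hp0 : p ≠ 0 := by
      intro h; rw [h, Polynomial.natDegree_zero] at hd; omega
    have hlc : p.leadingCoeff ≠ 0 := Polynomial.leadingCoeff_ne_zero.mpr hp0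
    have hdecomp : p.eraseLead + Polynomial.C p.leadingCoeff * Polynomial.X ^ p.natDegree = p :=
      Polynomial.eraseLead_add_C_mul_X_pow p
    set L : D.F := algebraMap Fq D.F p.leadingCoeff * x ^ p.natDegree with hL
    have hLa : aeval x (Polynomial.C p.leadingCoeff * Polynomial.X ^ p.natDegree) = L := by
      rw [map_mul, Polynomial.aeval_C, map_pow, Polynomial.aeval_X]
    obtain ⟨hL0, hLv⟩ := hterm p.leadingCoeff hlc p.natDegree
    have hLvPinf : D.v Pinf L = -((p.natDegree : ℤ) * μ) := by
      rw [hLv Pinf, hxv]; ring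
    have haev : aeval x p = aeval x p.eraseLead + L := by
      conv_lhs => rw [← hdecomp]
      rw [map_add, hLa]
    by_cases hq0 : p.eraseLead = 0
    · rw [hq0, map_zero, zero_add] at haev
      constructor
      · intro P hP
        rw [haev, hLv P]
        have := hxreg P hP
        positivity
      · intro _
        rw [haev]
        exact ⟨hL0, hLvPinf⟩
    · have hqd : p.eraseLead.natDegree < p.natDegree := by
        rcases Polynomial.eraseLead_natDegree_lt_or_eraseLead_eq_zero p with h | h
        · exact h
        · exact absurd h hq0
      obtain ⟨hreg, hq⟩ := ih p.eraseLead (by omega)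
      obtain ⟨hqne, hqv⟩ := hq hq0
      have hlt : D.v Pinf L < D.v Pinf (aeval x p.eraseLead) := by
        rw [hLvPinf, hqv]
        have h1 : (p.eraseLead.natDegree : ℤ) * μ < (p.natDegree : ℤ) * μ := by
          have : (p.eraseLead.natDegree : ℤ) < (p.natDegree : ℤ) := by exact_mod_cast hqd
          exact mul_lt_mul_of_pos_right this (by exact_mod_cast hμpos)
        omega
      obtain ⟨hne, hv⟩ := D.v_add_eq_left Pinf hL0 hqne hlt
      rw [add_comm] at hne hv
      constructor
      · intro P hP
        rw [haev]
        have hmin := D.v_add' P (aeval x p.eraseLead) L (haev ▸ (haev ▸ hne))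
        have h1 := hreg P hP
        have h2 : 0 ≤ D.v P L := by
          rw [hLv P]
          have := hxreg P hP
          positivity
        omega
      · intro _
        rw [haev]
        exact ⟨hne, by rw [hv, hLvPinf]⟩

lemma divisor_apply (Pinf P : D.Place) (m : ℤ) (A : D.Divisor) :
    (Finsupp.single Pinf m + A) P = (if P = Pinf then m else 0) + A P := by
  rw [Finsupp.add_apply, Finsupp.single_apply]
  simp only [eq_comm]

lemma mem_Ya_iff (Pinf : D.Place) (A : D.Divisor) (a : D.F) :
    a ∈ D.Ya Pinf A ↔ (a = 0 ∨ ∀ P, P ≠ Pinf → 0 ≤ D.v P a + A P) := by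
  constructor
  · rintro ⟨m, hm⟩
    rcases (D.mem_RRmod _ a).mp hm with h | h
    · exact Or.inl h
    · refine Or.inr fun P hP => ?_
      have := h P
      rw [D.divisor_apply, if_neg hP, zero_add] at this
      exact this
  · rintro (h | h)
    · exact ⟨0, h ▸ (D.RRmod _).zero_mem⟩
    · refine ⟨-(D.v Pinf a) - A Pinf, (D.mem_RRmod _ a).mpr (Or.inr fun P => ?_)⟩
      rw [D.divisor_apply]
      by_cases hP : P = Pinf
      · subst hP; rw [if_pos rfl]; ring_nf; omega
      · rw [if_neg hP, zero_add]; exact h P hP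

lemma mem_RRmod_iff_delta_le (Pinf : D.Place) (A : D.Divisor) {a : D.F}
    (ha : a ∈ D.Ya Pinf A) (h0 : a ≠ 0) (m : ℤ) :
    a ∈ D.RRmod (Finsupp.single Pinf m + A) ↔ D.deltaZ Pinf A a ≤ m := by
  constructor
  · intro hm
    rcases (D.mem_RRmod _ a).mp hm with h | h
    · exact absurd h h0
    · have := h Pinf
      rw [D.divisor_apply, if_pos rfl] at this
      unfold deltaZ
      omega
  · intro hm
    refine (D.mem_RRmod _ a).mpr (Or.inr fun P => ?_)
    rw [D.divisor_apply]
    by_cases hP : P = Pinf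
    · subst hP
      rw [if_pos rfl]
      unfold deltaZ at hm
      omega
    · rw [if_neg hP, zero_add]
      rcases (D.mem_Ya_iff Pinf A a).mp ha with h | h
      · exact absurd h h0
      · exact h P hP

lemma degDiv_single_add (Pinf : D.Place) (hPinf : D.degPlace Pinf = 1)
    (m : ℤ) (A : D.Divisor) :
    D.degDiv (Finsupp.single Pinf m + A) = m + D.degDiv A := by
  unfold degDiv
  rw [Finsupp.sum_add_index' (fun P => by ring) (fun P b c => by ring)]
  rw [Finsupp.sum_single_index (by ring), hPinf]
  push_cast
  ring

lemma delta_add_deg_nonneg (Pinf : D.Place) (hPinf : D.degPlace Pinf = 1)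
    (A : D.Divisor) {a : D.F} (ha : a ∈ D.Ya Pinf A) (h0 : a ≠ 0) :
    0 ≤ D.deltaZ Pinf A a + D.degDiv A := by
  by_contra hneg
  push_neg at hneg
  have hmem : a ∈ D.RRmod (Finsupp.single Pinf (D.deltaZ Pinf A a) + A) :=
    (D.mem_RRmod_iff_delta_le Pinf A ha h0 _).mpr le_rfl
  have hbot := D.RRmod_eq_bot (Finsupp.single Pinf (D.deltaZ Pinf A a) + A)
    (by rw [show ((Finsupp.single Pinf (D.deltaZ Pinf A a) + A).sum
          fun P n => n * (D.degPlace P : ℤ)) = D.degDiv (Finsupp.single Pinf (D.deltaZ Pinf A a) + A) from rfl,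
        D.degDiv_single_add Pinf hPinf]; omega)
  rw [hbot, Submodule.mem_bot] at hmem
  exact h0 hmem

end FnF

open FnF in
/-- For any divisor `A` of `F`: (1) the Apéry system
`y₀^{(A)}, …, y_{μ−1}^{(A)}` is an `𝔽_q[x]`-basis of `Я(A)` (where `p ∈ 𝔽_q[x]` acts via
evaluation of `p` at the function `x`); and (2) `−deg A ≤ δ_A(y_i^{(A)}) ≤ 2g−1−deg A+μ`
for every `i`. -/
theorem apery_is_basis_and_delta_bounds
    {Fq : Type} [Field Fq] [Fintype Fq] (D : FnF Fq)
    (Pinf : D.Place) (hPinf : D.degPlace Pinf = 1)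
    (μ : ℕ) (hμpos : 0 < μ) (hμmem : (μ : ℤ) ∈ D.WSemigroup Pinf)
    (hμmin : ∀ m : ℤ, 0 < m → m ∈ D.WSemigroup Pinf → (μ : ℤ) ≤ m)
    (x : D.F) (hxv : D.v Pinf x = -(μ : ℤ)) (hxreg : ∀ P, P ≠ Pinf → 0 ≤ D.v P x)
    (A : D.Divisor) (y : Fin μ → D.F) (hy : D.IsApery Pinf μ A y) :
    ((∀ a ∈ D.Ya Pinf A, ∃ p : Fin μ → Polynomial Fq,
        a = ∑ i, Polynomial.aeval x (p i) * y i) ∧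
     (∀ p : Fin μ → Polynomial Fq,
        (∑ i, Polynomial.aeval x (p i) * y i) = 0 → ∀ i, p i = 0)) ∧
    (∀ i, -(D.degDiv A) ≤ D.deltaZ Pinf A (y i) ∧
      D.deltaZ Pinf A (y i) ≤ 2 * (D.genus : ℤ) - 1 - D.degDiv A + μ) := by
    classical
  have hμZ : (0:ℤ) < μ := by exact_mod_cast hμpos
  have hx0 : x ≠ 0 := by intro h; rw [h, D.v_zero] at hxv; omega
  have key := D.aeval_key Pinf μ hμpos x hxv hxreg
  have haev_reg : ∀ (p : Polynomial Fq) (P : D.Place), P ≠ Pinf → 0 ≤ D.v P (aeval x p) :=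
    fun p P hP => (key p.natDegree p le_rfl).1 P hP
  have haev_v : ∀ p : Polynomial Fq, p ≠ 0 → aeval x p ≠ 0 ∧
      D.v Pinf (aeval x p) = -((p.natDegree : ℤ) * μ) :=
    fun p hp => (key p.natDegree p le_rfl).2 hp
  have hdd : ∀ t : ℤ, ((Finsupp.single Pinf t + A).sum fun P n => n * (D.degPlace P : ℤ))
      = t + D.degDiv A := fun t => D.degDiv_single_add Pinf hPinf t A
  -- Part 2: bounds on δ(y i)
  have hbounds : ∀ i, -(D.degDiv A) ≤ D.deltaZ Pinf A (y i) ∧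
      D.deltaZ Pinf A (y i) ≤ 2 * (D.genus : ℤ) - 1 - D.degDiv A + μ := by
    intro i
    obtain ⟨hYai, hyi0, hyic, hyimin⟩ := hy i
    constructor
    · have := D.delta_add_deg_nonneg Pinf hPinf A hYai hyi0
      omega
    · set B : ℤ := 2 * (D.genus : ℤ) - D.degDiv A with hB
      set m : ℤ := B + ((i : ℤ) - B) % μ with hm
      have hmod1 : 0 ≤ ((i:ℤ) - B) % μ := Int.emod_nonneg _ (by omega)
      have hmod2 : ((i:ℤ) - B) % μ < μ := Int.emod_lt_of_pos _ hμZ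
      have hmcong : m ≡ (i:ℤ) [ZMOD (μ:ℤ)] := by
        have h1 : ((i:ℤ) - B) % μ ≡ ((i:ℤ) - B) [ZMOD (μ:ℤ)] :=
          Int.emod_emod_of_dvd _ dvd_rfl
        have h2 : m ≡ B + ((i:ℤ) - B) [ZMOD (μ:ℤ)] := Int.ModEq.add_left B h1
        simpa using h2
      have hdeg1 : 2 * (D.genus:ℤ) - 1 ≤
          ((Finsupp.single Pinf (m-1) + A).sum fun P n => n * (D.degPlace P : ℤ)) := by
        rw [hdd]; omega
      have e1 := D.riemannRoch_eq _ hdeg1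
      rw [hdd] at e1
      have e2 := D.riemannRoch_le (Finsupp.single Pinf m + A)
      rw [hdd] at e2
      have hle12 : D.RRmod (Finsupp.single Pinf (m-1) + A) ≤
          D.RRmod (Finsupp.single Pinf m + A) := by
        intro f hf
        rcases (D.mem_RRmod _ f).mp hf with h | h
        · exact (D.mem_RRmod _ f).mpr (Or.inl h)
        · refine (D.mem_RRmod _ f).mpr (Or.inr fun P => ?_)
          have h1 := h P
          rw [D.divisor_apply] at h1 ⊢
          by_cases hP : P = Pinf
          · rw [if_pos hP] at h1 ⊢; omega
          · rw [if_neg hP] at h1 ⊢; omega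
      have hlt12 : D.RRmod (Finsupp.single Pinf (m-1) + A) <
          D.RRmod (Finsupp.single Pinf m + A) := by
        refine lt_of_le_of_ne hle12 (fun hEq => ?_)
        rw [hEq] at e1
        omega
      obtain ⟨a, haD2, haD1⟩ := SetLike.exists_of_lt hlt12
      have ha0 : a ≠ 0 := fun h => haD1 (h ▸ (D.RRmod _).zero_mem)
      have haYa : a ∈ D.Ya Pinf A := ⟨m, haD2⟩
      have hδle : D.deltaZ Pinf A a ≤ m :=
        (D.mem_RRmod_iff_delta_le Pinf A haYa ha0 m).mp haD2
      have hδge : m - 1 < D.deltaZ Pinf A a := by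
        by_contra h
        push_neg at h
        exact haD1 ((D.mem_RRmod_iff_delta_le Pinf A haYa ha0 (m-1)).mpr h)
      have hδ : D.deltaZ Pinf A a = m := by omega
      have := hyimin a haYa ha0 (hδ ▸ hmcong)
      omega
  -- Part 1a: spanning
  have hspan : ∀ n : ℕ, ∀ a ∈ D.Ya Pinf A, a ≠ 0 →
      (D.deltaZ Pinf A a + D.degDiv A).toNat ≤ n →
      ∃ p : Fin μ → Polynomial Fq, a = ∑ i, aeval x (p i) * y i := by
    intro n
    induction n using Nat.strong_induction_on with
    | _ n ih =>
    intro a ha ha0 hn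
    have h0a := D.delta_add_deg_nonneg Pinf hPinf A ha ha0
    set m : ℤ := D.deltaZ Pinf A a with hmdef
    have hiLt : ((m % μ).toNat) < μ := by
      have h1 : 0 ≤ m % μ := Int.emod_nonneg _ (by omega)
      have h2 : m % μ < μ := Int.emod_lt_of_pos _ hμZ
      omega
    set i : Fin μ := ⟨(m % μ).toNat, hiLt⟩ with hidef
    have hicast : ((i : ℕ) : ℤ) = m % μ := by
      show (((m % μ).toNat : ℕ) : ℤ) = m % μ
      exact Int.toNat_of_nonneg (Int.emod_nonneg _ (by omega))
    have hmi : m ≡ (i:ℤ) [ZMOD (μ:ℤ)] := by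
      rw [hicast]
      exact (Int.emod_emod_of_dvd m dvd_rfl).symm
    obtain ⟨hYai, hyi0, hyic, hyimin⟩ := hy i
    have hδyile : D.deltaZ Pinf A (y i) ≤ m := hyimin a ha ha0 hmi
    have hdvd : (μ:ℤ) ∣ (m - D.deltaZ Pinf A (y i)) := (hyic.trans hmi.symm).dvd
    obtain ⟨e, he⟩ := hdvd
    have he0 : 0 ≤ e := by nlinarith
    set k : ℕ := e.toNat with hkdef
    have hkc : (k:ℤ) = e := Int.toNat_of_nonneg he0
    have hk : (k:ℤ) * μ = m - D.deltaZ Pinf A (y i) := by rw [hkc]; linarith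
    set w : D.F := x ^ k * y i with hwdef
    have hw0 : w ≠ 0 := mul_ne_zero (pow_ne_zero k hx0) hyi0
    have hδyi : D.deltaZ Pinf A (y i) = -(D.v Pinf (y i)) - A Pinf := rfl
    have hvw : D.v Pinf w = -m - A Pinf := by
      rw [hwdef, D.v_mul Pinf _ _ (pow_ne_zero k hx0) hyi0, D.v_pow Pinf hx0, hxv,
        mul_neg, hk]
      omega
    have hva : D.v Pinf a = -m - A Pinf := by
      have h1 : m = -(D.v Pinf a) - A Pinf := hmdef
      omega
    set t : D.F := a * w⁻¹ with htdef
    have ht0 : t ≠ 0 := mul_ne_zero ha0 (inv_ne_zero hw0)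
    have hvt : D.v Pinf t = 0 := by
      rw [htdef, D.v_mul Pinf a w⁻¹ ha0 (inv_ne_zero hw0), D.v_inv Pinf hw0, hva, hvw]
      ring
    set c : Fq := D.eval Pinf t with hcdef
    have hc0 : c ≠ 0 := by
      intro h
      rcases (D.eval_eq_zero_iff Pinf t hPinf (le_of_eq hvt.symm)).mp h with h1 | h1
      · exact ht0 h1
      · omega
    have hcF : algebraMap Fq D.F c ≠ 0 :=
      fun h => hc0 ((algebraMap Fq D.F).injective (by simpa using h))
    set b : D.F := a - algebraMap Fq D.F c * w with hbdef
    have hbfact : b = (t - algebraMap Fq D.F c) * w := by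
      rw [hbdef, htdef, sub_mul, inv_mul_cancel_right₀ hw0]
    have hab : a = b + algebraMap Fq D.F c * w := by rw [hbdef]; ring
    set P0 : Polynomial Fq := Polynomial.C c * Polynomial.X ^ k with hP0
    have hP0eval : aeval x P0 = algebraMap Fq D.F c * x ^ k := by
      rw [hP0, map_mul, Polynomial.aeval_C, map_pow, Polynomial.aeval_X]
    have hsingle : (∑ j, aeval x (if j = i then P0 else 0) * y j)
        = algebraMap Fq D.F c * w := by
      rw [Finset.sum_eq_single_of_mem i (Finset.mem_univ i)]
      · rw [if_pos rfl, hP0eval, hwdef, mul_assoc]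
      · intro j _ hji
        rw [if_neg hji, map_zero, zero_mul]
    by_cases hb0 : b = 0
    · refine ⟨fun j => if j = i then P0 else 0, ?_⟩
      rw [hsingle, hab, hb0, zero_add]
    · have hs0 : t - algebraMap Fq D.F c ≠ 0 := by
        intro h
        exact hb0 (by rw [hbfact, h, zero_mul])
      have hvs : 0 ≤ D.v Pinf (t - algebraMap Fq D.F c) := by
        have h1 := D.v_add' Pinf t (-(algebraMap Fq D.F c))
          (by rw [← sub_eq_add_neg]; exact hs0)
        rw [← sub_eq_add_neg, D.v_neg, D.v_const] at h1
        omega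
      have hevs : D.eval Pinf (t - algebraMap Fq D.F c) = 0 := by
        rw [sub_eq_add_neg,
          D.eval_add Pinf t (-(algebraMap Fq D.F c)) hPinf (le_of_eq hvt.symm)
            (by rw [D.v_neg, D.v_const]),
          ← map_neg (algebraMap Fq D.F) c, D.eval_const Pinf (-c) hPinf]
        show c + -c = 0
        ring
      have hvs1 : 1 ≤ D.v Pinf (t - algebraMap Fq D.F c) := by
        rcases (D.eval_eq_zero_iff Pinf _ hPinf hvs).mp hevs with h | h
        · exact absurd h hs0
        · exact h
      have hvb : D.v Pinf b = D.v Pinf (t - algebraMap Fq D.F c) + D.v Pinf w := by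
        rw [hbfact, D.v_mul Pinf _ _ hs0 hw0]
      have hδb : D.deltaZ Pinf A b ≤ m - 1 := by
        have h1 : D.deltaZ Pinf A b = -(D.v Pinf b) - A Pinf := rfl
        omega
      have hbYa : b ∈ D.Ya Pinf A := by
        rw [D.mem_Ya_iff]
        right
        intro P hP
        have h1 : 0 ≤ D.v P a + A P := by
          rcases (D.mem_Ya_iff Pinf A a).mp ha with h | h
          · exact absurd h ha0
          · exact h P hP
        have h3 : 0 ≤ D.v P (y i) + A P := by
          rcases (D.mem_Ya_iff Pinf A (y i)).mp hYai with h | h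
          · exact absurd h hyi0
          · exact h P hP
        have h2 : D.v P (algebraMap Fq D.F c * w) = (k:ℤ) * D.v P x + D.v P (y i) := by
          rw [hwdef, D.v_mul P _ _ hcF (mul_ne_zero (pow_ne_zero _ hx0) hyi0),
            D.v_const, D.v_mul P _ _ (pow_ne_zero _ hx0) hyi0, D.v_pow P hx0, zero_add]
        have h4 := hxreg P hP
        have h5 : 0 ≤ (k:ℤ) * D.v P x := mul_nonneg (by positivity) h4
        have hmin := D.v_add' P a (-(algebraMap Fq D.F c * w))
          (by rw [← sub_eq_add_neg, ← hbdef]; exact hb0)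
        rw [← sub_eq_add_neg, D.v_neg, ← hbdef] at hmin
        omega
      have h0b := D.delta_add_deg_nonneg Pinf hPinf A hbYa hb0
      obtain ⟨q, hq⟩ := ih (D.deltaZ Pinf A b + D.degDiv A).toNat (by omega) b hbYa hb0 le_rfl
      refine ⟨fun j => q j + (if j = i then P0 else 0), ?_⟩
      rw [hab]
      simp only [map_add, add_mul]
      rw [Finset.sum_add_distrib, ← hq, hsingle]
  -- Part 1b: independence
  have hindep : ∀ p : Fin μ → Polynomial Fq,
      (∑ i, aeval x (p i) * y i) = 0 → ∀ i, p i = 0 := by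
    intro p hsum
    by_contra hcon
    push_neg at hcon
    obtain ⟨i0', hi0'⟩ := hcon
    set s : Finset (Fin μ) := Finset.univ.filter (fun j => p j ≠ 0) with hsdef
    have hsne : s.Nonempty := ⟨i0', by simp [hsdef, hi0']⟩
    have hmem_s : ∀ j, j ∈ s ↔ p j ≠ 0 := by
      intro j; simp [hsdef]
    have hf0 : ∀ j ∈ s, aeval x (p j) * y j ≠ 0 := by
      intro j hj
      exact mul_ne_zero (haev_v (p j) ((hmem_s j).mp hj)).1 (hy j).2.1
    have hssum : (∑ j ∈ s, aeval x (p j) * y j) = 0 := by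
      rw [← hsum]
      exact Finset.sum_subset (Finset.filter_subset _ _) (fun j _ hj => by
        have h1 : p j = 0 := not_not.mp (fun h => hj ((hmem_s j).mpr h))
        rw [h1, map_zero, zero_mul])
    have hv : ∀ j ∈ s, D.v Pinf (aeval x (p j) * y j)
        = -(((p j).natDegree : ℤ) * μ) + D.v Pinf (y j) := by
      intro j hj
      rw [D.v_mul Pinf _ _ (haev_v _ ((hmem_s j).mp hj)).1 (hy j).2.1,
        (haev_v _ ((hmem_s j).mp hj)).2]
    have hinjv : ∀ j ∈ s, ∀ l ∈ s,
        D.v Pinf (aeval x (p j) * y j) = D.v Pinf (aeval x (p l) * y l) → j = l := by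
      intro j hj l hl hvjl
      have e1 := hv j hj
      have e2 := hv l hl
      have hdj : D.deltaZ Pinf A (y j) = -(D.v Pinf (y j)) - A Pinf := rfl
      have hdl : D.deltaZ Pinf A (y l) = -(D.v Pinf (y l)) - A Pinf := rfl
      have he : D.deltaZ Pinf A (y j) - D.deltaZ Pinf A (y l)
          = ((p l).natDegree : ℤ) * μ - ((p j).natDegree : ℤ) * μ := by
        rw [hdj, hdl]; linarith
      have h1 : D.deltaZ Pinf A (y j) ≡ D.deltaZ Pinf A (y l) [ZMOD (μ:ℤ)] := by
        refine Int.modEq_iff_dvd.mpr ⟨((p j).natDegree : ℤ) - ((p l).natDegree : ℤ), ?_⟩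
        linear_combination -he
      have hmod : (j:ℤ) ≡ (l:ℤ) [ZMOD (μ:ℤ)] :=
        (((hy j).2.2.1).symm.trans h1).trans ((hy l).2.2.1)
      have hdvd2 : (μ:ℤ) ∣ ((l:ℤ) - (j:ℤ)) := Int.ModEq.dvd hmod
      have hj1 : (j:ℕ) < μ := j.isLt
      have hl1 : (l:ℕ) < μ
      · exact l.isLt
      have hz := Int.eq_zero_of_dvd_of_natAbs_lt_natAbs hdvd2 (by omega)
      apply Fin.ext
      omega
    obtain ⟨i0, hi0s, hi0min⟩ := Finset.exists_min_image s
      (fun j => D.v Pinf (aeval x (p j) * y j)) hsne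
    have herase : (∑ j ∈ s.erase i0, aeval x (p j) * y j)
        = -(aeval x (p i0) * y i0) := by
      have h1 := Finset.add_sum_erase s (fun j => aeval x (p j) * y j) hi0s
      have h2 := hssum
      rw [← h1] at h2
      simpa using eq_neg_of_add_eq_zero_right h2
    have hne0 : (∑ j ∈ s.erase i0, aeval x (p j) * y j) ≠ 0 := by
      rw [herase]
      exact neg_ne_zero.mpr (hf0 i0 hi0s)
    have hstrict : ∀ j ∈ s.erase i0, aeval x (p j) * y j ≠ 0 →
        D.v Pinf (aeval x (p i0) * y i0) + 1 ≤ D.v Pinf (aeval x (p j) * y j) := by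
      intro j hj _
      have hjs := Finset.mem_of_mem_erase hj
      have hjne : j ≠ i0 := Finset.ne_of_mem_erase hj
      have hle := hi0min j hjs
      have hne : D.v Pinf (aeval x (p j) * y j) ≠ D.v Pinf (aeval x (p i0) * y i0) :=
        fun h => hjne (hinjv j hjs i0 hi0s h)
      omega
    have hfinal := D.v_sum Pinf (D.v Pinf (aeval x (p i0) * y i0) + 1)
      (s.erase i0) _ hne0 hstrict
    rw [herase, D.v_neg] at hfinal
    omega
  refine ⟨⟨fun a ha => ?_, hindep⟩, hbounds⟩
  by_cases h0 : a = 0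
  · exact ⟨fun _ => 0, by simp [h0]⟩
  · exact hspan (D.deltaZ Pinf A a + D.degDiv A).toNat a ha h0 le_rfl
end
end

section
/- If Q ∈ F[z] has a root of multiplicity s at (P, r), where P is a rational place of F and r ∈ 𝔽_q, and f ∈ F satisfies v_P(f) ≥ 0 and f(P) = r, then v_P(Q(f)) ≥ s. -/
noncomputable section

open Polynomial
attribute [local instance] Classical.propDecidable

namespace FnF

variable {Fq : Type} [Field Fq] (D : FnF Fq)

/-- The `b`-th coefficient `Q_b ∈ F` of the expansion `Q(z) = Σ_b Q_b (z − r)^b` of a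
polynomial `Q ∈ F[z]` around `r ∈ 𝔽_q`. -/
def taylorCoeff (r : Fq) (Q : Polynomial D.F) (b : ℕ) : D.F :=
  (Q.comp (Polynomial.X + Polynomial.C (algebraMap Fq D.F r))).coeff b

/-- `Q ∈ F[z]` has a root of multiplicity at least `s` at `(P, r)`: writing
`Q = Σ_b Q_b (z − r)^b`, every coefficient satisfies `v_P(Q_b) ≥ s − b`. This is
equivalent to the expansion `Q = Σ_{a+b≥s} c_{a,b} φ^a (z−r)^b` in any local
parameter `φ` of `P`. -/
def HasRootMultAtLeast (P : D.Place) (r : Fq) (Q : Polynomial D.F) (s : ℕ) : Prop :=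
  ∀ b : ℕ, D.taylorCoeff r Q b = 0 ∨ (s : ℤ) - b ≤ D.v P (D.taylorCoeff r Q b)

/-- `Q ∈ F[z]` has a root of multiplicity exactly `s` at `(P, r)`: in addition to
multiplicity at least `s`, some coefficient with `b ≤ s` satisfies `v_P(Q_b) = s − b`
(i.e. `c_{a,s−a} ≠ 0` for some `0 ≤ a ≤ s`). -/
def HasRootMult (P : D.Place) (r : Fq) (Q : Polynomial D.F) (s : ℕ) : Prop :=
  D.HasRootMultAtLeast P r Q s ∧
    ∃ b ≤ s, D.taylorCoeff r Q b ≠ 0 ∧ D.v P (D.taylorCoeff r Q b) = (s : ℤ) - b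

end FnF


lemma FnF.v_one' {Fq : Type} [Field Fq] (D : FnF Fq) (P : D.Place) : D.v P 1 = 0 := by
  have := D.v_const P 1
  simpa using this

lemma FnF.v_pow' {Fq : Type} [Field Fq] (D : FnF Fq) (P : D.Place) (g : D.F) (hg : g ≠ 0)
    (n : ℕ) : D.v P (g ^ n) = n * D.v P g := by
  induction n with
  | zero => simpa using D.v_one' P
  | succ n ih =>
    rw [pow_succ, D.v_mul P _ _ (pow_ne_zero _ hg) hg, ih]
    push_cast
    ring

lemma FnF.v_sum' {Fq : Type} [Field Fq] (D : FnF Fq) (P : D.Place) {ι : Type*}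
    (t : Finset ι) (g : ι → D.F) (m : ℤ)
    (h : ∀ i ∈ t, g i = 0 ∨ m ≤ D.v P (g i)) :
    (∑ i ∈ t, g i) = 0 ∨ m ≤ D.v P (∑ i ∈ t, g i) := by
  classical
  induction t using Finset.induction_on with
  | empty => simp
  | @insert a t ha ih =>
    rw [Finset.sum_insert ha]
    have ih' := ih (fun i hi => h i (Finset.mem_insert_of_mem hi))
    by_cases h1 : g a = 0
    · rw [h1, zero_add]; exact ih'
    by_cases h2 : (∑ i ∈ t, g i) = 0
    · rw [h2, add_zero]
      rcases h a (Finset.mem_insert_self a t) with h3 | h3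
      · exact absurd h3 h1
      · exact Or.inr h3
    by_cases h3 : g a + ∑ i ∈ t, g i = 0
    · exact Or.inl h3
    right
    have hmin := D.v_add P (g a) (∑ i ∈ t, g i) h3 h1 h2
    rcases h a (Finset.mem_insert_self a t) with h4 | h4
    · exact absurd h4 h1
    rcases ih' with h5 | h5
    · exact absurd h5 h2
    exact le_trans (le_min h4 h5) hmin


open FnF in
/-- If `Q ∈ F[z]` has a root of multiplicity `s` at `(P, r)`, where `P`
is a rational place of `F` and `r ∈ 𝔽_q`, and `f ∈ F` satisfies `v_P(f) ≥ 0` and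
`f(P) = r`, then `v_P(Q(f)) ≥ s` (with the convention `v_P(0) = ∞`). -/
theorem val_ge_of_root_mult
    {Fq : Type} [Field Fq] [Fintype Fq] (D : FnF Fq)
    (P : D.Place) (hP : D.degPlace P = 1) (r : Fq)
    (s : ℕ) (Q : Polynomial D.F) (hQ : D.HasRootMult P r Q s)
    (f : D.F) (hf : 0 ≤ D.v P f) (hfr : D.eval P f = r) :
    Q.eval f = 0 ∨ (s : ℤ) ≤ D.v P (Q.eval f) := by
  obtain ⟨hQ1, _⟩ := hQ
  set r' : D.F := algebraMap Fq D.F r with hr'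
  set Q' : Polynomial D.F := Q.comp (Polynomial.X + Polynomial.C r') with hQ'def
  have hcoeff : ∀ b, Q'.coeff b = D.taylorCoeff r Q b := fun b => rfl
  have heval : Q.eval f = Q'.eval (f - r') := by
    rw [hQ'def, Polynomial.eval_comp]
    simp
  by_cases hfz : f - r' = 0
  · rw [heval, hfz, ← Polynomial.coeff_zero_eq_eval_zero, hcoeff]
    rcases hQ1 0 with h | h
    · exact Or.inl h
    · right
      simpa using h
  · -- v_P (f - r') ≥ 1
    have hvr' : D.v P r' = 0 := D.v_const P r
    have hvge : 0 ≤ D.v P (f - r') := by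
      by_cases hf0 : f = 0
      · rw [hf0, zero_sub, D.v_neg, hvr']
      by_cases hr0 : r' = 0
      · rw [hr0, sub_zero]; exact hf
      have hne : f + -r' ≠ 0 := by rwa [← sub_eq_add_neg]
      have := D.v_add P f (-r') hne hf0 (neg_ne_zero.mpr hr0)
      rw [← sub_eq_add_neg] at this
      refine le_trans ?_ this
      rw [D.v_neg, hvr']
      exact le_min hf le_rfl
    have heval0 : D.eval P (f - r') = 0 := by
      have h1 : f - r' = f + algebraMap Fq D.F (-r) := by
        rw [map_neg, ← sub_eq_add_neg]
      rw [h1, D.eval_add P f _ hP hf (by rw [D.v_const]), hfr, D.eval_const P _ hP]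
      ring
    have hv1 : 1 ≤ D.v P (f - r') := by
      rcases (D.eval_eq_zero_iff P (f - r') hP hvge).mp heval0 with h | h
      · exact absurd h hfz
      · exact h
    rw [heval, Polynomial.eval_eq_sum_range]
    refine D.v_sum' P _ _ _ (fun i _ => ?_)
    by_cases hc : Q'.coeff i = 0
    · left; rw [hc, zero_mul]
    right
    rcases hQ1 i with h | h
    · rw [hcoeff] at hc; exact absurd h hc
    rw [hcoeff] at hc ⊢
    rw [D.v_mul P _ _ hc (pow_ne_zero _ hfz), D.v_pow' P _ hfz]
    have : (i : ℤ) ≤ (i : ℤ) * D.v P (f - r') :=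
      le_mul_of_one_le_right (Int.ofNat_nonneg i) hv1
    linarith
end
end

section
/- Let A be a divisor of F and E = E_1 + ⋯ + E_N a sum of N distinct rational places, all different from P∞, with supp A ∩ supp E = ∅. Then for any (w_1,…,w_N) ∈ 𝔽_q^N there exists a ∈ Я(A) with δ_A(a) ≤ deg E + 2g − 1 − deg A such that a(E_j) = w_j for j = 1,…,N. -/
noncomputable section

open Polynomial
attribute [local instance] Classical.propDecidable

/-! The evaluation map `L(B) → 𝔽_q^N` at the places `E_j` has kernel inside `L(B - E)`.
Choosing `B = m·P∞ + A` with `deg (B - E) = 2g - 1`, Riemann–Roch gives `dim L(B) = N + g` and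
`dim L(B - E) = g`, so the map has rank `N` and is onto: any preimage of `w` interpolates. -/

namespace FnF

variable {Fq : Type} [Field Fq] (D : FnF Fq)

def degHom : D.Divisor →+ ℤ :=
  AddMonoidHom.mk' D.degDiv fun _ _ =>
    Finsupp.sum_add_index' (fun _ => zero_mul _) (fun _ _ _ => add_mul _ _ _)

lemma degHom_apply (X : D.Divisor) : D.degHom X = D.degDiv X := rfl

lemma degDiv_add (X Y : D.Divisor) : D.degDiv (X + Y) = D.degDiv X + D.degDiv Y :=
  map_add D.degHom X Y

lemma degDiv_sub (X Y : D.Divisor) : D.degDiv (X - Y) = D.degDiv X - D.degDiv Y :=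
  map_sub D.degHom X Y

lemma degDiv_single (P : D.Place) (n : ℤ) :
    D.degDiv (Finsupp.single P n) = n * D.degPlace P :=
  Finsupp.sum_single_index (zero_mul _)

section sumPlaces

variable {ι : Type*} [Fintype ι] (Es : ι → D.Place)

def sumPlaces : D.Divisor := ∑ j, Finsupp.single (Es j) 1

lemma degDiv_sumPlaces (hrat : ∀ j, D.degPlace (Es j) = 1) :
    D.degDiv (D.sumPlaces Es) = Fintype.card ι := by
  change D.degHom (∑ j, Finsupp.single (Es j) 1) = _
  simp [map_sum, degHom_apply, degDiv_single, hrat]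

lemma sumPlaces_apply_self {Es} (hinj : Function.Injective Es) (j : ι) :
    D.sumPlaces Es (Es j) = 1 := by
  rw [sumPlaces, Finsupp.finsetSum_apply, Finset.sum_eq_single_of_mem j (Finset.mem_univ j)
    fun k _ hk => Finsupp.single_eq_of_ne' fun h => hk (hinj h), Finsupp.single_eq_same]

lemma sumPlaces_apply_of_notMem_range {P : D.Place} (hP : P ∉ Set.range Es) :
    D.sumPlaces Es P = 0 := by
  rw [sumPlaces, Finsupp.finsetSum_apply]
  exact Finset.sum_eq_zero fun k _ => Finsupp.single_eq_of_ne' fun h => hP ⟨k, h⟩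

end sumPlaces

lemma finrank_RRmod {A : D.Divisor} (h : 2 * (D.genus : ℤ) - 1 ≤ D.degDiv A) :
    (Module.finrank Fq (D.RRmod A) : ℤ) = D.degDiv A + 1 - D.genus :=
  D.riemannRoch_eq A h

lemma finiteDimensional_RRmod {A : D.Divisor} (h : 2 * (D.genus : ℤ) - 1 ≤ D.degDiv A) :
    FiniteDimensional Fq (D.RRmod A) := by
  by_cases hneg : D.degDiv A < 0
  · rw [D.RRmod_eq_bot A hneg]
    infer_instance
  · refine FiniteDimensional.of_finrank_pos ?_
    have := D.finrank_RRmod h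
    omega

lemma v_nonneg_of_mem_RRmod {A : D.Divisor} {f : D.F} (hf : f ∈ D.RRmod A) {P : D.Place}
    (hP : A P = 0) : 0 ≤ D.v P f := by
  rcases (D.mem_RRmod A f).1 hf with rfl | h
  · exact (D.v_zero P).ge
  · simpa [hP] using h P

section evalMap

variable {ι : Type*} [Fintype ι] {B : D.Divisor} {Es : ι → D.Place}
  (hrat : ∀ j, D.degPlace (Es j) = 1) (hB : ∀ j, B (Es j) = 0)

def evalMap : D.RRmod B →ₗ[Fq] ι → Fq where
  toFun f j := D.eval (Es j) f
  map_add' f g := funext fun j =>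
    D.eval_add (Es j) f g (hrat j) (D.v_nonneg_of_mem_RRmod f.2 (hB j))
      (D.v_nonneg_of_mem_RRmod g.2 (hB j))
  map_smul' c f := funext fun j => by
    simp only [SetLike.val_smul, Algebra.smul_def, RingHom.id_apply, Pi.smul_apply]
    rw [D.eval_mul (Es j) _ _ (hrat j) (D.v_const (Es j) c).ge
      (D.v_nonneg_of_mem_RRmod f.2 (hB j)), D.eval_const (Es j) c (hrat j)]
    rfl

lemma mem_RRmod_sub_sumPlaces_of_mem_ker (hinj : Function.Injective Es) {f : D.RRmod B}
    (hf : f ∈ LinearMap.ker (D.evalMap hrat hB)) :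
    (f : D.F) ∈ D.RRmod (B - D.sumPlaces Es) := by
  refine (D.mem_RRmod _ _).2 (or_iff_not_imp_left.2 fun hf0 P => ?_)
  have hfB := ((D.mem_RRmod B f).1 f.2).resolve_left hf0 P
  rw [Finsupp.sub_apply]
  by_cases hP : P ∈ Set.range Es
  · obtain ⟨j, rfl⟩ := hP
    have hzero : D.eval (Es j) f = 0 := congrFun (LinearMap.mem_ker.1 hf) j
    have hvanish := (D.eval_eq_zero_iff (Es j) f (hrat j)
      (D.v_nonneg_of_mem_RRmod f.2 (hB j))).1 hzero |>.resolve_left hf0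
    rw [hB j, D.sumPlaces_apply_self hinj j]
    omega
  · rw [D.sumPlaces_apply_of_notMem_range Es hP]
    simpa using hfB

lemma evalMap_surjective (hinj : Function.Injective Es)
    (hdeg : 2 * (D.genus : ℤ) - 1 ≤ D.degDiv (B - D.sumPlaces Es)) :
    Function.Surjective (D.evalMap hrat hB) := by
  set φ := D.evalMap hrat hB
  have hdegE := D.degDiv_sumPlaces Es hrat
  have hdegB : 2 * (D.genus : ℤ) - 1 ≤ D.degDiv B := by
    rw [D.degDiv_sub, hdegE] at hdeg
    omega
  have := D.finiteDimensional_RRmod hdegB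
  have := D.finiteDimensional_RRmod hdeg
  have hfinB := D.finrank_RRmod hdegB
  have hfinBE := D.finrank_RRmod hdeg
  rw [D.degDiv_sub, hdegE] at hfinBE
  let kerToRR : LinearMap.ker φ →ₗ[Fq] D.RRmod (B - D.sumPlaces Es) :=
    ((D.RRmod B).subtype.comp (LinearMap.ker φ).subtype).codRestrict _
      fun f => D.mem_RRmod_sub_sumPlaces_of_mem_ker hrat hB hinj f.2
  have hker : Module.finrank Fq (LinearMap.ker φ) ≤
      Module.finrank Fq (D.RRmod (B - D.sumPlaces Es)) :=
    LinearMap.finrank_le_finrank_of_injective (f := kerToRR) fun _ _ h =>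
      Subtype.ext <| Subtype.ext (congrArg Subtype.val h :)
  have hrankNullity := LinearMap.finrank_range_add_finrank_ker φ
  have hrange := Submodule.finrank_le (LinearMap.range φ)
  rw [Module.finrank_fintype_fun_eq_card] at hrange
  rw [← LinearMap.range_eq_top]
  refine Submodule.eq_top_of_finrank_eq ?_
  rw [Module.finrank_fintype_fun_eq_card]
  omega

end evalMap

lemma delta_le_of_mem_RRmod {Pinf : D.Place} {A : D.Divisor} {m : ℤ} {a : D.F}
    (ha : a ∈ D.RRmod (Finsupp.single Pinf m + A)) : D.delta Pinf A a ≤ m := by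
  rw [delta]
  split_ifs with ha0
  · exact bot_le
  · have h := ((D.mem_RRmod _ a).1 ha).resolve_left ha0 Pinf
    simp only [Finsupp.add_apply, Finsupp.single_eq_same] at h
    exact WithBot.coe_le_coe.2 (by rw [deltaZ]; omega)

end FnF

theorem exists_interpolating_function_general
    {Fq : Type} [Field Fq] (D : FnF Fq)
    (Pinf : D.Place) (hPinf : D.degPlace Pinf = 1)
    (N : ℕ) (Es : Fin N → D.Place) (hinj : Function.Injective Es)
    (hrat : ∀ j, D.degPlace (Es j) = 1) (hne : ∀ j, Es j ≠ Pinf)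
    (A : D.Divisor) (hdisj : ∀ j, A (Es j) = 0)
    (w : Fin N → Fq) :
    ∃ a ∈ D.Ya Pinf A,
      D.delta Pinf A a ≤ (((N : ℤ) + 2 * (D.genus : ℤ) - 1 - D.degDiv A : ℤ) : WithBot ℤ) ∧
      ∀ j, D.eval (Es j) a = w j := by
  set m : ℤ := N + 2 * D.genus - 1 - D.degDiv A
  set B : D.Divisor := Finsupp.single Pinf m + A
  have hB : ∀ j, B (Es j) = 0 := fun j => by
    simp [B, Finsupp.single_eq_of_ne' (hne j).symm, hdisj j]
  have hdeg : D.degDiv (B - D.sumPlaces Es) = 2 * D.genus - 1 := by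
    rw [D.degDiv_sub, D.degDiv_add, D.degDiv_single, hPinf, D.degDiv_sumPlaces Es hrat,
      Fintype.card_fin]
    ring
  obtain ⟨f, hf⟩ := D.evalMap_surjective hrat hB hinj hdeg.ge w
  exact ⟨f, ⟨m, f.2⟩, D.delta_le_of_mem_RRmod f.2, congrFun hf⟩

open FnF in
/-- Let `A` be a divisor of `F` and `E = E_1 + ⋯ + E_N` a sum of `N`
distinct rational places, all different from `P∞`, with `supp A ∩ supp E = ∅`. Then for
any `(w_1,…,w_N) ∈ 𝔽_q^N` there exists `a ∈ Я(A)` with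
`δ_A(a) ≤ deg E + 2g − 1 − deg A` such that `a(E_j) = w_j` for `j = 1,…,N`. -/
theorem exists_interpolating_function
    {Fq : Type} [Field Fq] [Fintype Fq] (D : FnF Fq)
    (Pinf : D.Place) (hPinf : D.degPlace Pinf = 1)
    (N : ℕ) (Es : Fin N → D.Place) (hinj : Function.Injective Es)
    (hrat : ∀ j, D.degPlace (Es j) = 1) (hne : ∀ j, Es j ≠ Pinf)
    (A : D.Divisor) (hdisj : ∀ j, A (Es j) = 0)
    (w : Fin N → Fq) :
    ∃ a ∈ D.Ya Pinf A,
      D.delta Pinf A a ≤ (((N : ℤ) + 2 * (D.genus : ℤ) - 1 - D.degDiv A : ℤ) : WithBot ℤ) ∧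
      ∀ j, D.eval (Es j) a = w j :=
  exists_interpolating_function_general D Pinf hPinf N Es hinj hrat hne A hdisj w
end
end
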